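/- Let Q = {(Q_i, C_i)}_{i∈[0..k]} be separable but not closed with respect to a VPL L̂. Then there exist an index i, an access word q ∈ Q_i, and a symbol m in the extended symbol set Σ_M such that q·m is not C_i-equivalent to any element of Q_i, and adding q·m to Q_i preserves separability of all (Q_j, C_j). -/
import Mathlib


namespace VStar

inductive Kind : Type
  | plain | call | ret
deriving DecidableEq

variable {α : Type}

/-- Well-matched strings with respect to a tagging. -/
inductive WellMatched (t : α → Kind) : List α → Prop
  | nil : WellMatched t []
  | plain {c : α} {s : List α} : t c = Kind.plain → WellMatched t s →
      WellMatched t (c :: s)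
  | nest {a b : α} {s1 s2 : List α} : t a = Kind.call → t b = Kind.ret →
      WellMatched t s1 → WellMatched t s2 →
      WellMatched t (a :: s1 ++ b :: s2)

/-- Well-matched visibly pushdown grammars. -/
structure VPG (α N : Type) (t : α → Kind) where
  start : N
  peps : N → Prop
  pplain : N → α → N → Prop
  pmatch : N → α → N → α → N → Prop
  plain_ok : ∀ {L c L1}, pplain L c L1 → t c = Kind.plain
  match_ok : ∀ {L a L1 b L2}, pmatch L a L1 b L2 → t a = Kind.call ∧ t b = Kind.ret

inductive VPG.Derives {α N : Type} {t : α → Kind} (G : VPG α N t) : N → List α → Prop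
  | eps {L} : G.peps L → G.Derives L []
  | plain {L c L1 s} : G.pplain L c L1 → G.Derives L1 s → G.Derives L (c :: s)
  | nest {L a L1 b L2 s1 s2} : G.pmatch L a L1 b L2 →
      G.Derives L1 s1 → G.Derives L2 s2 → G.Derives L (a :: s1 ++ b :: s2)

def VPG.lang {α N : Type} {t : α → Kind} (G : VPG α N t) : Set (List α) :=
  {s | G.Derives G.start s}

/-- A language is a visibly pushdown language (for tagging `t`). -/
def IsVPL (t : α → Kind) (L : Set (List α)) : Prop :=
  ∃ (n : ℕ) (G : VPG α (Fin n) t), L = G.lang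

/-- `lpow x k` is the concatenation of `k` copies of `x`. -/
def lpow (x : List α) (k : ℕ) : List α := (List.replicate k x).flatten

/-- A nesting pattern of `s = u ++ x ++ z ++ y ++ v` with respect to language `L`. -/
def NestingPattern (L : Set (List α)) (u x z y v : List α) : Prop :=
  x ≠ [] ∧ y ≠ [] ∧
    (∀ k, 1 ≤ k → u ++ lpow x k ++ z ++ lpow y k ++ v ∈ L) ∧
    (∀ k j, k ≠ j → u ++ lpow x k ++ z ++ lpow y j ++ v ∉ L)

/-- `x` contains an occurrence of a call symbol with no matching return inside `x`. -/
def UnmatchedCallIn (t : α → Kind) (x : List α) : Prop :=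
  ∃ x1 a x2, x = x1 ++ a :: x2 ∧ t a = Kind.call ∧
    ¬ ∃ w b w', x2 = w ++ b :: w' ∧ t b = Kind.ret ∧ WellMatched t w

/-- `y` contains an occurrence of a return symbol with no matching call inside `y`. -/
def UnmatchedRetIn (t : α → Kind) (y : List α) : Prop :=
  ∃ y1 b y2, y = y1 ++ b :: y2 ∧ t b = Kind.ret ∧
    ¬ ∃ w a w', y1 = w ++ a :: w' ∧ t a = Kind.call ∧ WellMatched t w'

/-- A tagging is compatible with a nesting pattern `(x, y)`. -/
def PatternCompatible (t : α → Kind) (x y : List α) : Prop :=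
  UnmatchedCallIn t x ∧ UnmatchedRetIn t y

/-- Compatibility of a tagging with a set `S` of seed strings (patterns w.r.t. `L`). -/
def CompatibleWith (t : α → Kind) (L S : Set (List α)) : Prop :=
  (∀ s ∈ S, WellMatched t s) ∧
  ∀ u x z y v, (u ++ x ++ z ++ y ++ v) ∈ S → NestingPattern L u x z y v →
    PatternCompatible t x y

/-- Compatibility of a tagging with the whole language. -/
def Compatible (t : α → Kind) (L : Set (List α)) : Prop := CompatibleWith t L L

/-- Syntactic congruence with respect to `L`. -/
def SynCongr (L : Set (List α)) (s1 s2 : List α) : Prop :=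
  ∀ u v, u ++ s1 ++ v ∈ L ↔ u ++ s2 ++ v ∈ L

end VStar

namespace VStar

/-- The base `k`-SEVPA congruence `∼₀`. -/
def sim0 (L : Set (List α)) (s1 s2 : List α) : Prop :=
  ∀ w, s1 ++ w ∈ L ↔ s2 ++ w ∈ L

/-- The module congruence `∼ᵢ` for the call symbol `a`. -/
def simi (L : Set (List α)) (a : α) (s1 s2 : List α) : Prop :=
  ∀ w w', w ++ a :: s1 ++ w' ∈ L ↔ w ++ a :: s2 ++ w' ∈ L

/-- `C₀`-equivalence: `∼₀` relativized to a finite set of test suffixes. -/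
def simC0 (L : Set (List α)) (C : Finset (List α)) (s1 s2 : List α) : Prop :=
  ∀ w ∈ C, (s1 ++ w ∈ L ↔ s2 ++ w ∈ L)

/-- `Cᵢ`-equivalence: `∼ᵢ` relativized to a finite set of test contexts. -/
def simCi (L : Set (List α)) (a : α) (C : Finset (List α × List α))
    (s1 s2 : List α) : Prop :=
  ∀ p ∈ C, (p.1 ++ a :: s1 ++ p.2 ∈ L ↔ p.1 ++ a :: s2 ++ p.2 ∈ L)

/-- The type of well-matched strings. -/
def WMString (t : α → Kind) : Type := {s : List α // WellMatched t s}

/-- Number of `∼₀`-classes of well-matched strings. -/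
noncomputable def numClasses0 (t : α → Kind) (L : Set (List α)) : ℕ :=
  Nat.card (Quot (fun s1 s2 : WMString t => sim0 L s1.1 s2.1))

/-- Number of `∼ᵢ`-classes of well-matched strings. -/
noncomputable def numClassesi (t : α → Kind) (L : Set (List α)) (a : α) : ℕ :=
  Nat.card (Quot (fun s1 s2 : WMString t => simi L a s1.1 s2.1))

/-- Total state count of the minimal `k`-SEVPA (sum of the class counts of
the congruences `∼₀, ∼₁, …, ∼ₖ`). -/
noncomputable def sevpaStates (t : α → Kind) (L : Set (List α)) {k : ℕ} (a : Fin k → α) : ℕ :=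
  numClasses0 t L + ∑ i : Fin k, numClassesi t L (a i)

/-- Separability of an access-word/test-word family. -/
def SeparableFam (L : Set (List α)) {k : ℕ} (a : Fin k → α)
    (Q0 : Finset (List α)) (Qi : Fin k → Finset (List α))
    (C0 : Finset (List α)) (Ci : Fin k → Finset (List α × List α)) : Prop :=
  (∀ q1 ∈ Q0, ∀ q2 ∈ Q0, q1 ≠ q2 → ¬ simC0 L C0 q1 q2) ∧
  ∀ i : Fin k, ∀ q1 ∈ Qi i, ∀ q2 ∈ Qi i, q1 ≠ q2 → ¬ simCi L (a i) (Ci i) q1 q2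

/-- The extended symbol set `Σ_M`: single symbols and nested words `‹aᵢ q b›`. -/
def SigmaM (t : α → Kind) {k : ℕ} (a : Fin k → α)
    (Qi : Fin k → Finset (List α)) : Set (List α) :=
  {m | (∃ c : α, m = [c]) ∨
    ∃ (i : Fin k) (q : List α) (b : α), q ∈ Qi i ∧ t b = Kind.ret ∧
      m = a i :: q ++ [b]}

/-- Closedness of an access-word/test-word family. -/
def ClosedFam (t : α → Kind) (L : Set (List α)) {k : ℕ} (a : Fin k → α)
    (Q0 : Finset (List α)) (Qi : Fin k → Finset (List α))
    (C0 : Finset (List α)) (Ci : Fin k → Finset (List α × List α)) : Prop :=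
  (∀ q ∈ Q0, ∀ m ∈ SigmaM t a Qi, ∃ q' ∈ Q0, simC0 L C0 (q ++ m) q') ∧
  ∀ i : Fin k, ∀ q ∈ Qi i, ∀ m ∈ SigmaM t a Qi,
    ∃ q' ∈ Qi i, simCi L (a i) (Ci i) (q ++ m) q'

end VStar

namespace VStar

lemma simC0_refl {α : Type} (L : Set (List α)) (C : Finset (List α)) (s : List α) :
    simC0 L C s s := fun _ _ => Iff.rfl

lemma simC0_symm {α : Type} {L : Set (List α)} {C : Finset (List α)} {s1 s2 : List α}
    (h : simC0 L C s1 s2) : simC0 L C s2 s1 := fun w hw => (h w hw).symm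

lemma simCi_refl {α : Type} (L : Set (List α)) (a : α) (C : Finset (List α × List α))
    (s : List α) : simCi L a C s s := fun _ _ => Iff.rfl

lemma simCi_symm {α : Type} {L : Set (List α)} {a : α} {C : Finset (List α × List α)}
    {s1 s2 : List α} (h : simCi L a C s1 s2) : simCi L a C s2 s1 :=
  fun p hp => (h p hp).symm

end VStar

open VStar in
/-- a separable but unclosed family can be extended by one access
word `q ++ m` (with `m ∈ Σ_M`) while preserving separability. -/
theorem unclosed_extension_preserves_separability {α : Type} [DecidableEq α] (t : α → Kind)
    (L : Set (List α)) {k : ℕ} (a : Fin k → α)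
    (Q0 : Finset (List α)) (Qi : Fin k → Finset (List α))
    (C0 : Finset (List α)) (Ci : Fin k → Finset (List α × List α))
    (hsep : SeparableFam L a Q0 Qi C0 Ci)
    (hnotclosed : ¬ ClosedFam t L a Q0 Qi C0 Ci) :
    (∃ q ∈ Q0, ∃ m ∈ SigmaM t a Qi,
        (∀ q' ∈ Q0, ¬ simC0 L C0 (q ++ m) q') ∧
        SeparableFam L a (insert (q ++ m) Q0) Qi C0 Ci) ∨
    (∃ i : Fin k, ∃ q ∈ Qi i, ∃ m ∈ SigmaM t a Qi,
        (∀ q' ∈ Qi i, ¬ simCi L (a i) (Ci i) (q ++ m) q') ∧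
        SeparableFam L a Q0
          (Function.update Qi i (insert (q ++ m) (Qi i))) C0 Ci) := by
  rw [ClosedFam, not_and_or] at hnotclosed
  rcases hnotclosed with h | h
  · left
    push_neg at h
    obtain ⟨q, hq, m, hm, hne⟩ := h
    have hnew : ∀ q' ∈ Q0, ¬ simC0 L C0 (q ++ m) q' := fun q' hq' hsim =>
      hne q' hq' hsim
    refine ⟨q, hq, m, hm, hnew, ?_, hsep.2⟩
    intro q1 hq1 q2 hq2 hne12
    rcases Finset.mem_insert.mp hq1 with rfl | hq1 <;>
      rcases Finset.mem_insert.mp hq2 with rfl | hq2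
    · exact absurd rfl hne12
    · exact hnew q2 hq2
    · exact fun hsim => hnew q1 hq1 (simC0_symm hsim)
    · exact hsep.1 q1 hq1 q2 hq2 hne12
  · right
    push_neg at h
    obtain ⟨i, q, hq, m, hm, hne⟩ := h
    have hnew : ∀ q' ∈ Qi i, ¬ simCi L (a i) (Ci i) (q ++ m) q' := fun q' hq' hsim =>
      hne q' hq' hsim
    refine ⟨i, q, hq, m, hm, hnew, hsep.1, ?_⟩
    intro j q1 hq1 q2 hq2 hne12
    by_cases hji : j = i
    · subst hji
      rw [Function.update_self] at hq1 hq2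
      rcases Finset.mem_insert.mp hq1 with rfl | hq1 <;>
        rcases Finset.mem_insert.mp hq2 with rfl | hq2
      · exact absurd rfl hne12
      · exact hnew q2 hq2
      · exact fun hsim => hnew q1 hq1 (simCi_symm hsim)
      · exact hsep.2 j q1 hq1 q2 hq2 hne12
    · rw [Function.update_of_ne hji] at hq1 hq2
      exact hsep.2 j q1 hq1 q2 hq2 hne12
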